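/- arXiv:2503.24329 — 2 statements merged into one kernel-verified Lean document; each statement's English description precedes it below -/
import Mathlib

section
/- Let f(X) = ‖AX − XB‖_F², let X* be a minimizer of f over the permutation matrices Π_n, and let L = 2(‖A‖_F + ‖B‖_F)² be a Lipschitz constant of f on D_n. Suppose W ∈ ℝ^{n×n} is such that there exist a ∈ [0, 1/2) and ε > 0 with W_{ij} ≥ 1/(a+ε) whenever X*_{ij} = 0 and W_{ij} ≤ 1/(1−a+ε) whenever X*_{ij} = 1. If λ ≥ 2(a+ε)(1−a+ε)L/(1−2a), then X* minimizes the function X ↦ f(X) + λ·Σ_{i,j} W_{ij} X_{ij} over the doubly stochastic matrices D_n. -/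
open Finset Matrix

/-- Frobenius norm of a square real matrix. -/
noncomputable def frob {n : ℕ} (M : Matrix (Fin n) (Fin n) ℝ) : ℝ :=
  Real.sqrt (∑ i, ∑ j, (M i j) ^ 2)

/-- `X` is doubly stochastic. -/
def IsDS {n : ℕ} (X : Matrix (Fin n) (Fin n) ℝ) : Prop :=
  (∀ i j, 0 ≤ X i j) ∧ (∀ i, ∑ j, X i j = 1) ∧ (∀ j, ∑ i, X i j = 1)

/-- `X` is a permutation matrix. -/
def IsPermMat {n : ℕ} (X : Matrix (Fin n) (Fin n) ℝ) : Prop :=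
  (∀ i j, X i j = 0 ∨ X i j = 1) ∧ (∀ i, ∑ j, X i j = 1) ∧ (∀ j, ∑ i, X i j = 1)

lemma frob_nonneg {n : ℕ} (M : Matrix (Fin n) (Fin n) ℝ) : 0 ≤ frob M := Real.sqrt_nonneg _

lemma frob_sq {n : ℕ} (M : Matrix (Fin n) (Fin n) ℝ) : frob M ^ 2 = ∑ i, ∑ j, (M i j) ^ 2 :=
  Real.sq_sqrt (by positivity)

lemma frob_le_of_sq_le {n : ℕ} {M : Matrix (Fin n) (Fin n) ℝ} {c : ℝ} (hc : 0 ≤ c)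
    (h : ∑ i, ∑ j, (M i j) ^ 2 ≤ c ^ 2) : frob M ≤ c := by
  calc frob M ≤ Real.sqrt (c ^ 2) := Real.sqrt_le_sqrt h
  _ = c := Real.sqrt_sq hc

lemma double_cs {n : ℕ} (f g : Fin n → Fin n → ℝ) :
    (∑ i, ∑ j, f i j * g i j) ^ 2 ≤ (∑ i, ∑ j, (f i j)^2) * (∑ i, ∑ j, (g i j)^2) := by
  simpa [Fintype.sum_prod_type] using
    Finset.sum_mul_sq_le_sq_mul_sq Finset.univ
      (fun p : Fin n × Fin n => f p.1 p.2) (fun p => g p.1 p.2)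

lemma frob_add_le {n : ℕ} (M N : Matrix (Fin n) (Fin n) ℝ) :
    frob (M + N) ≤ frob M + frob N := by
  apply frob_le_of_sq_le (add_nonneg (frob_nonneg M) (frob_nonneg N))
  have hcs : (∑ i, ∑ j, M i j * N i j) ≤ frob M * frob N := by
    have hc : 0 ≤ frob M * frob N := mul_nonneg (frob_nonneg M) (frob_nonneg N)
    calc (∑ i, ∑ j, M i j * N i j) ≤ |∑ i, ∑ j, M i j * N i j| := le_abs_self _
    _ = Real.sqrt ((∑ i, ∑ j, M i j * N i j)^2) := (Real.sqrt_sq_eq_abs _).symm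
    _ ≤ Real.sqrt ((frob M * frob N)^2) := by
        apply Real.sqrt_le_sqrt
        calc (∑ i, ∑ j, M i j * N i j)^2 ≤ (∑ i, ∑ j, (M i j)^2) * (∑ i, ∑ j, (N i j)^2) :=
              double_cs M N
        _ = (frob M * frob N)^2 := by rw [mul_pow, frob_sq, frob_sq]
    _ = frob M * frob N := Real.sqrt_sq hc
  have e : ∑ i, ∑ j, ((M + N) i j)^2 =
      (∑ i, ∑ j, (M i j)^2) + 2*(∑ i, ∑ j, M i j * N i j) + (∑ i, ∑ j, (N i j)^2) := by
    rw [Finset.mul_sum, ← Finset.sum_add_distrib, ← Finset.sum_add_distrib]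
    refine Finset.sum_congr rfl fun i _ => ?_
    rw [Finset.mul_sum, ← Finset.sum_add_distrib, ← Finset.sum_add_distrib]
    refine Finset.sum_congr rfl fun j _ => ?_
    simp only [Matrix.add_apply]; ring
  rw [e]
  nlinarith [frob_sq M, frob_sq N]

lemma frob_neg {n : ℕ} (M : Matrix (Fin n) (Fin n) ℝ) : frob (-M) = frob M := by
  simp [frob, Matrix.neg_apply]

lemma frob_sub_le {n : ℕ} (M N : Matrix (Fin n) (Fin n) ℝ) :
    frob (M - N) ≤ frob M + frob N := by
  rw [sub_eq_add_neg]
  exact (frob_add_le M (-N)).trans (by rw [frob_neg])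

lemma frob_mul_le {n : ℕ} (M N : Matrix (Fin n) (Fin n) ℝ) :
    frob (M * N) ≤ frob M * frob N := by
  apply frob_le_of_sq_le (mul_nonneg (frob_nonneg M) (frob_nonneg N))
  calc ∑ i, ∑ j, ((M * N) i j)^2
      ≤ ∑ i, ∑ j, (∑ k, (M i k)^2) * (∑ k, (N k j)^2) := by
        refine Finset.sum_le_sum fun i _ => Finset.sum_le_sum fun j _ => ?_
        rw [Matrix.mul_apply]
        exact Finset.sum_mul_sq_le_sq_mul_sq Finset.univ (fun k => M i k) (fun k => N k j)
    _ = (∑ i, ∑ k, (M i k)^2) * (∑ j, ∑ k, (N k j)^2) := by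
        rw [Finset.sum_mul_sum]
    _ = (frob M * frob N)^2 := by
        rw [mul_pow, frob_sq, frob_sq]
        congr 1
        exact Finset.sum_comm

lemma frob_le_sum_abs {n : ℕ} (M : Matrix (Fin n) (Fin n) ℝ) :
    frob M ≤ ∑ i, ∑ j, |M i j| := by
  apply frob_le_of_sq_le (by positivity)
  have hS : ∀ i j, |M i j| ≤ ∑ i', ∑ j', |M i' j'| := by
    intro i j
    calc |M i j| ≤ ∑ j', |M i j'| :=
          Finset.single_le_sum (f := fun j' => |M i j'|) (fun _ _ => abs_nonneg _)
            (Finset.mem_univ j)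
    _ ≤ ∑ i', ∑ j', |M i' j'| :=
          Finset.single_le_sum (f := fun i' => ∑ j', |M i' j'|)
            (fun _ _ => Finset.sum_nonneg fun _ _ => abs_nonneg _) (Finset.mem_univ i)
  calc ∑ i, ∑ j, (M i j)^2
      ≤ ∑ i, ∑ j, |M i j| * (∑ i', ∑ j', |M i' j'|) := by
        refine Finset.sum_le_sum fun i _ => Finset.sum_le_sum fun j _ => ?_
        rw [← sq_abs, sq]
        exact mul_le_mul_of_nonneg_left (hS i j) (abs_nonneg _)
    _ = (∑ i, ∑ j, |M i j|)^2 := by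
        simp only [← Finset.sum_mul]
        rw [sq]

/-- For a doubly stochastic `X`, `frob (A * X) ≤ frob A`. -/
lemma frob_mul_ds_left {n : ℕ} (A X : Matrix (Fin n) (Fin n) ℝ)
    (h0 : ∀ i j, 0 ≤ X i j) (hr : ∀ i, ∑ j, X i j = 1) (hc : ∀ j, ∑ i, X i j = 1) :
    frob (A * X) ≤ frob A := by
  apply frob_le_of_sq_le (frob_nonneg A)
  calc ∑ i, ∑ j, ((A * X) i j)^2
      ≤ ∑ i, ∑ j, ∑ k, (A i k)^2 * X k j := by
        refine Finset.sum_le_sum fun i _ => Finset.sum_le_sum fun j _ => ?_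
        rw [Matrix.mul_apply]
        have cs := Finset.sum_mul_sq_le_sq_mul_sq Finset.univ
          (fun k => A i k * Real.sqrt (X k j)) (fun k => Real.sqrt (X k j))
        have e1 : ∀ k : Fin n, A i k * Real.sqrt (X k j) * Real.sqrt (X k j) = A i k * X k j :=
          fun k => by rw [mul_assoc, Real.mul_self_sqrt (h0 k j)]
        have e2 : ∀ k : Fin n, (A i k * Real.sqrt (X k j))^2 = (A i k)^2 * X k j :=
          fun k => by rw [mul_pow, Real.sq_sqrt (h0 k j)]
        have e3 : ∀ k : Fin n, (Real.sqrt (X k j))^2 = X k j :=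
          fun k => Real.sq_sqrt (h0 k j)
        simp only [e1, e2, e3] at cs
        rw [hc j, mul_one] at cs
        exact cs
    _ = ∑ i, ∑ k, (A i k)^2 * (∑ j, X k j) := by
        refine Finset.sum_congr rfl fun i _ => ?_
        rw [Finset.sum_comm]
        exact Finset.sum_congr rfl fun k _ => (Finset.mul_sum _ _ _).symm
    _ = frob A ^ 2 := by
        rw [frob_sq]
        exact Finset.sum_congr rfl fun i _ => Finset.sum_congr rfl fun k _ => by
          rw [hr k, mul_one]

/-- For a doubly stochastic `X`, `frob (X * B) ≤ frob B`. -/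
lemma frob_mul_ds_right {n : ℕ} (B X : Matrix (Fin n) (Fin n) ℝ)
    (h0 : ∀ i j, 0 ≤ X i j) (hr : ∀ i, ∑ j, X i j = 1) (hc : ∀ j, ∑ i, X i j = 1) :
    frob (X * B) ≤ frob B := by
  apply frob_le_of_sq_le (frob_nonneg B)
  calc ∑ i, ∑ j, ((X * B) i j)^2
      ≤ ∑ i, ∑ j, ∑ k, X i k * (B k j)^2 := by
        refine Finset.sum_le_sum fun i _ => Finset.sum_le_sum fun j _ => ?_
        rw [Matrix.mul_apply]
        have cs := Finset.sum_mul_sq_le_sq_mul_sq Finset.univ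
          (fun k => Real.sqrt (X i k)) (fun k => Real.sqrt (X i k) * B k j)
        have e1 : ∀ k : Fin n, Real.sqrt (X i k) * (Real.sqrt (X i k) * B k j) = X i k * B k j :=
          fun k => by rw [← mul_assoc, Real.mul_self_sqrt (h0 i k)]
        have e2 : ∀ k : Fin n, (Real.sqrt (X i k) * B k j)^2 = X i k * (B k j)^2 :=
          fun k => by rw [mul_pow, Real.sq_sqrt (h0 i k)]
        have e3 : ∀ k : Fin n, (Real.sqrt (X i k))^2 = X i k :=
          fun k => Real.sq_sqrt (h0 i k)
        simp only [e1, e2, e3] at cs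
        rw [hr i, one_mul] at cs
        exact cs
    _ = ∑ j, ∑ k, (∑ i, X i k) * (B k j)^2 := by
        rw [Finset.sum_comm]
        refine Finset.sum_congr rfl fun j _ => ?_
        rw [Finset.sum_comm]
        exact Finset.sum_congr rfl fun k _ => (Finset.sum_mul _ _ _).symm
    _ = frob B ^ 2 := by
        rw [frob_sq]
        rw [show (∑ i, ∑ j, (B i j)^2) = ∑ j, ∑ i, (B i j)^2 from Finset.sum_comm]
        exact Finset.sum_congr rfl fun x _ => Finset.sum_congr rfl fun y _ => by
          rw [hc y, one_mul]

lemma pos_part_add_neg_part (x : ℝ) : max x 0 + max (-x) 0 = |x| := by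
  rcases le_total x 0 with h | h
  · rw [max_eq_right h, max_eq_left (neg_nonneg.2 h), abs_of_nonpos h, zero_add]
  · rw [max_eq_left h, max_eq_right (neg_nonpos.2 h), abs_of_nonneg h, add_zero]

lemma pos_part_sub_neg_part (x : ℝ) : max x 0 - max (-x) 0 = x := by
  rcases le_total x 0 with h | h
  · rw [max_eq_right h, max_eq_left (neg_nonneg.2 h)]; ring
  · rw [max_eq_left h, max_eq_right (neg_nonpos.2 h)]; ring

set_option maxHeartbeats 1000000 in
theorem stmt_7 {n : ℕ} (A B : Matrix (Fin n) (Fin n) ℝ)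
    (Xstar : Matrix (Fin n) (Fin n) ℝ) (hXs : IsPermMat Xstar)
    (hmin : ∀ P : Matrix (Fin n) (Fin n) ℝ, IsPermMat P →
      frob (A * Xstar - Xstar * B) ^ 2 ≤ frob (A * P - P * B) ^ 2)
    (W : Matrix (Fin n) (Fin n) ℝ) (a ε : ℝ) (ha0 : 0 ≤ a) (ha : a < 1 / 2) (hε : 0 < ε)
    (hW0 : ∀ i j, Xstar i j = 0 → 1 / (a + ε) ≤ W i j)
    (hW1 : ∀ i j, Xstar i j = 1 → W i j ≤ 1 / (1 - a + ε))
    (lam : ℝ)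
    (hlam : 2 * (a + ε) * (1 - a + ε) * (2 * (frob A + frob B) ^ 2) / (1 - 2 * a) ≤ lam) :
    ∀ X : Matrix (Fin n) (Fin n) ℝ, IsDS X →
      frob (A * Xstar - Xstar * B) ^ 2 + lam * ∑ i, ∑ j, W i j * Xstar i j ≤
        frob (A * X - X * B) ^ 2 + lam * ∑ i, ∑ j, W i j * X i j := by
  intro X hX
  obtain ⟨hX0, hXr, hXc⟩ := hX
  obtain ⟨hP01, hPr, hPc⟩ := hXs
  have hP0 : ∀ i j, 0 ≤ Xstar i j := by
    intro i j; rcases hP01 i j with h | h <;> rw [h] <;> norm_num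
  have hXle : ∀ i j, X i j ≤ 1 := by
    intro i j
    have h := Finset.single_le_sum (f := fun j' => X i j') (fun j' _ => hX0 i j')
      (Finset.mem_univ j)
    rwa [hXr i] at h
  -- basic positivity facts
  have haε : 0 < a + ε := by linarith
  have h1aε : 0 < 1 - a + ε := by linarith
  have h12a : 0 < 1 - 2 * a := by linarith
  set K := frob A + frob B with hK
  have hK0 : 0 ≤ K := add_nonneg (frob_nonneg A) (frob_nonneg B)
  set α := 1 / (a + ε) with hα
  set β := 1 / (1 - a + ε) with hβ
  -- the ℓ¹ distance and positive/negative parts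
  set s := ∑ i, ∑ j, |X i j - Xstar i j| with hs
  set tp := ∑ i, ∑ j, max (X i j - Xstar i j) 0 with htp
  set tm := ∑ i, ∑ j, max (Xstar i j - X i j) 0 with htm
  have hs0 : 0 ≤ s := Finset.sum_nonneg fun i _ => Finset.sum_nonneg fun j _ => abs_nonneg _
  have hsum0 : ∑ i, ∑ j, (X i j - Xstar i j) = 0 := by
    simp [Finset.sum_sub_distrib, hXr, hPr]
  have h1 : tp + tm = s := by
    rw [htp, htm, hs, ← Finset.sum_add_distrib]
    refine Finset.sum_congr rfl fun i _ => ?_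
    rw [← Finset.sum_add_distrib]
    refine Finset.sum_congr rfl fun j _ => ?_
    have := pos_part_add_neg_part (X i j - Xstar i j)
    rwa [neg_sub] at this
  have h2 : tp - tm = 0 := by
    have e : tp - tm = ∑ i, ∑ j, (X i j - Xstar i j) := by
      rw [htp, htm, ← Finset.sum_sub_distrib]
      refine Finset.sum_congr rfl fun i _ => ?_
      rw [← Finset.sum_sub_distrib]
      refine Finset.sum_congr rfl fun j _ => ?_
      have := pos_part_sub_neg_part (X i j - Xstar i j)
      rwa [neg_sub] at this
    rw [e, hsum0]
  have htps : tp = s / 2 := by linarith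
  have htms : tm = s / 2 := by linarith
  -- Step B : penalty gap lower bound
  have hWs : α * tp - β * tm ≤ ∑ i, ∑ j, (W i j * X i j - W i j * Xstar i j) := by
    rw [htp, htm, Finset.mul_sum, Finset.mul_sum, ← Finset.sum_sub_distrib]
    refine Finset.sum_le_sum fun i _ => ?_
    rw [Finset.mul_sum, Finset.mul_sum, ← Finset.sum_sub_distrib]
    refine Finset.sum_le_sum fun j _ => ?_
    rcases hP01 i j with h | h
    · rw [h, sub_zero, mul_zero, sub_zero, zero_sub, max_eq_left (hX0 i j),
        max_eq_right (neg_nonpos.2 (hX0 i j)), mul_zero, sub_zero]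
      exact mul_le_mul_of_nonneg_right (hW0 i j h) (hX0 i j)
    · have hx1 : X i j - 1 ≤ 0 := by linarith [hXle i j]
      have hWb := hW1 i j h
      rw [h]
      rw [max_eq_right hx1, max_eq_left (by linarith : (0:ℝ) ≤ 1 - X i j), mul_zero, zero_sub,
        mul_one]
      have hb : W i j * (1 - X i j) ≤ β * (1 - X i j) :=
        mul_le_mul_of_nonneg_right hWb (by linarith [hXle i j])
      nlinarith [hb]
  -- Step A : Lipschitz-type bound
  have hu : frob (A * Xstar - Xstar * B) ≤ K :=
    (frob_sub_le _ _).trans (add_le_add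
      (frob_mul_ds_left A Xstar hP0 hPr hPc) (frob_mul_ds_right B Xstar hP0 hPr hPc))
  have hv : frob (A * X - X * B) ≤ K :=
    (frob_sub_le _ _).trans (add_le_add
      (frob_mul_ds_left A X hX0 hXr hXc) (frob_mul_ds_right B X hX0 hXr hXc))
  have hDs : frob (Xstar - X) ≤ s := by
    refine (frob_le_sum_abs _).trans (le_of_eq ?_)
    rw [hs]
    refine Finset.sum_congr rfl fun i _ => Finset.sum_congr rfl fun j _ => ?_
    rw [Matrix.sub_apply, abs_sub_comm]
  have huv : frob ((A * Xstar - Xstar * B) - (A * X - X * B)) ≤ K * s := by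
    have he : (A * Xstar - Xstar * B) - (A * X - X * B)
        = A * (Xstar - X) - (Xstar - X) * B := by noncomm_ring
    rw [he]
    calc frob (A * (Xstar - X) - (Xstar - X) * B)
        ≤ frob (A * (Xstar - X)) + frob ((Xstar - X) * B) := frob_sub_le _ _
      _ ≤ frob A * frob (Xstar - X) + frob (Xstar - X) * frob B :=
          add_le_add (frob_mul_le _ _) (frob_mul_le _ _)
      _ = K * frob (Xstar - X) := by rw [hK]; ring
      _ ≤ K * s := mul_le_mul_of_nonneg_left hDs hK0
  have htri : frob (A * Xstar - Xstar * B)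
      ≤ frob (A * X - X * B) + frob ((A * Xstar - Xstar * B) - (A * X - X * B)) := by
    have h := frob_add_le (A * X - X * B) ((A * Xstar - Xstar * B) - (A * X - X * B))
    rwa [show (A * X - X * B) + ((A * Xstar - Xstar * B) - (A * X - X * B))
        = A * Xstar - Xstar * B by abel] at h
  have hq : frob (A * Xstar - Xstar * B) ^ 2 - frob (A * X - X * B) ^ 2 ≤ 2 * K ^ 2 * s := by
    have h8 : 0 ≤ frob (A * Xstar - Xstar * B) + frob (A * X - X * B) :=
      add_nonneg (frob_nonneg _) (frob_nonneg _)
    have h4 : frob (A * Xstar - Xstar * B) - frob (A * X - X * B) ≤ K * s := by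
      linarith [htri, huv]
    have h5 : frob (A * Xstar - Xstar * B) + frob (A * X - X * B) ≤ 2 * K := by
      linarith [hu, hv]
    have hid : frob (A * Xstar - Xstar * B) ^ 2 - frob (A * X - X * B) ^ 2
        = (frob (A * Xstar - Xstar * B) + frob (A * X - X * B))
          * (frob (A * Xstar - Xstar * B) - frob (A * X - X * B)) := by ring
    have c1 : (frob (A * Xstar - Xstar * B) + frob (A * X - X * B))
          * (frob (A * Xstar - Xstar * B) - frob (A * X - X * B))
        ≤ (frob (A * Xstar - Xstar * B) + frob (A * X - X * B)) * (K * s) :=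
      mul_le_mul_of_nonneg_left h4 h8
    have c2 : (frob (A * Xstar - Xstar * B) + frob (A * X - X * B)) * (K * s)
        ≤ 2 * K * (K * s) := mul_le_mul_of_nonneg_right h5 (mul_nonneg hK0 hs0)
    have c3 : 2 * K * (K * s) = 2 * K ^ 2 * s := by ring
    linarith [hid, c1, c2, c3]
  -- Step C : combine
  have hlam0 : 0 ≤ lam := by
    refine le_trans (div_nonneg ?_ h12a.le) hlam
    nlinarith [mul_pos haε h1aε, sq_nonneg K]
  have h6 : 2 * (a + ε) * (1 - a + ε) * (2 * K ^ 2) ≤ lam * (1 - 2 * a) :=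
    (div_le_iff₀ h12a).mp hlam
  have hαβ : α - β = (1 - 2 * a) / ((a + ε) * (1 - a + ε)) := by
    rw [hα, hβ]; field_simp; ring
  have h7 : 2 * (2 * K ^ 2) ≤ lam * (α - β) := by
    rw [hαβ, ← mul_div_assoc, le_div_iff₀ (mul_pos haε h1aε)]
    nlinarith [h6]
  clear_value K α β s tp tm
  have hkey : 2 * K ^ 2 * s ≤ lam * (α * tp - β * tm) := by
    rw [htps, htms]
    have : lam * (α * (s / 2) - β * (s / 2)) = (lam * (α - β)) * (s / 2) := by ring
    rw [this]
    have h9 := mul_le_mul_of_nonneg_right h7 hs0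
    nlinarith [h9]
  have hmul : lam * (α * tp - β * tm) ≤ lam * ∑ i, ∑ j, (W i j * X i j - W i j * Xstar i j) :=
    mul_le_mul_of_nonneg_left hWs hlam0
  have hsplit : ∑ i, ∑ j, (W i j * X i j - W i j * Xstar i j)
      = (∑ i, ∑ j, W i j * X i j) - ∑ i, ∑ j, W i j * Xstar i j := by
    simp [Finset.sum_sub_distrib]
  rw [hsplit] at hmul
  have hfinal : lam * ((∑ i, ∑ j, W i j * X i j) - ∑ i, ∑ j, W i j * Xstar i j)
      = lam * (∑ i, ∑ j, W i j * X i j) - lam * ∑ i, ∑ j, W i j * Xstar i j := by ring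
  linarith [hq, hkey, hmul, hfinal.le, hfinal.ge]
end

section
/- If h : [0,1] → ℝ is strictly concave with h(0) = h(1) = 0, and X is a doubly stochastic n×n matrix, then Σ_{i,j} h(X_{ij}) ≥ 0, with equality if and only if X is a permutation matrix. -/
open Finset Matrix

lemma hpos_aux (h : ℝ → ℝ) (hconc : StrictConcaveOn ℝ (Set.Icc (0 : ℝ) 1) h)
    (h0 : h 0 = 0) (h1 : h 1 = 0) {x : ℝ} (hx0 : 0 < x) (hx1 : x < 1) : 0 < h x := by
  have := hconc.2 (Set.mem_Icc.mpr ⟨le_refl 0, zero_le_one⟩)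
    (Set.mem_Icc.mpr ⟨zero_le_one, le_refl 1⟩) (by norm_num)
    (show (0:ℝ) < 1 - x by linarith) hx0 (by ring)
  simpa [h0, h1] using this

lemma hnn_aux (h : ℝ → ℝ) (hconc : StrictConcaveOn ℝ (Set.Icc (0 : ℝ) 1) h)
    (h0 : h 0 = 0) (h1 : h 1 = 0) {x : ℝ} (hx0 : 0 ≤ x) (hx1 : x ≤ 1) : 0 ≤ h x := by
  rcases eq_or_lt_of_le hx0 with rfl | hx0'
  · simp [h0]
  rcases eq_or_lt_of_le hx1 with rfl | hx1'
  · simp [h1]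
  exact (hpos_aux h hconc h0 h1 hx0' hx1').le

theorem stmt_11 {n : ℕ} (h : ℝ → ℝ) (hconc : StrictConcaveOn ℝ (Set.Icc (0 : ℝ) 1) h)
    (h0 : h 0 = 0) (h1 : h 1 = 0) (X : Matrix (Fin n) (Fin n) ℝ) (hX : IsDS X) :
    0 ≤ ∑ i, ∑ j, h (X i j) ∧ ((∑ i, ∑ j, h (X i j)) = 0 ↔ IsPermMat X) := by
  obtain ⟨hnn, hrow, hcol⟩ := hX
  have hle1 : ∀ i j, X i j ≤ 1 := by
    intro i j
    have := hrow i
    have : X i j ≤ ∑ k, X i k :=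
      Finset.single_le_sum (fun k _ => hnn i k) (Finset.mem_univ j)
    linarith [hrow i]
  have hterm : ∀ i j, 0 ≤ h (X i j) := fun i j =>
    hnn_aux h hconc h0 h1 (hnn i j) (hle1 i j)
  have hsum_nn : 0 ≤ ∑ i, ∑ j, h (X i j) :=
    Finset.sum_nonneg fun i _ => Finset.sum_nonneg fun j _ => hterm i j
  refine ⟨hsum_nn, ?_, ?_⟩
  · intro hz
    have h1' : ∀ i ∈ Finset.univ, ∑ j, h (X i j) = 0 := by
      rw [← Finset.sum_eq_zero_iff_of_nonneg
        (fun i _ => Finset.sum_nonneg fun j _ => hterm i j)] at *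
      exact hz
    have h2' : ∀ i j, h (X i j) = 0 := by
      intro i j
      have := (Finset.sum_eq_zero_iff_of_nonneg (fun j _ => hterm i j)).mp
        (h1' i (Finset.mem_univ i)) j (Finset.mem_univ j)
      exact this
    refine ⟨?_, hrow, hcol⟩
    intro i j
    by_contra hc
    push_neg at hc
    have hx0 : 0 < X i j := lt_of_le_of_ne (hnn i j) (Ne.symm hc.1)
    have hx1 : X i j < 1 := lt_of_le_of_ne (hle1 i j) hc.2
    exact absurd (h2' i j) (ne_of_gt (hpos_aux h hconc h0 h1 hx0 hx1))
  · rintro ⟨hp, -, -⟩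
    refine Finset.sum_eq_zero fun i _ => Finset.sum_eq_zero fun j _ => ?_
    rcases hp i j with he | he <;> rw [he] <;> assumption
end
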